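/- Let R be a quasi-unital ring, i : R → R' an extension with R' smooth as an R-bimodule, and let M be a left R'-module that is smooth as a left R-module (via i). Then M is smooth as a left R'-module: the canonical map R' ⊗_{R'} M → M is an isomorphism. -/

import Mathlib

/-!
The map `R ⊗_R M → R' ⊗_{R'} M` induced by `i ⊗ 1` commutes with the action maps to `M`, and
the one on `R ⊗_R M` is bijective. Smoothness of `R'` as a left `R`-module gives `i(R)·R' = R'`,
and the relation `i(r)·r' ⊗ m ≡ i(r) ⊗ r'·m` then shows that the induced map is onto. So the
action map on `R' ⊗_{R'} M` is onto, and injective because its composite with an onto map is.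
-/

open TensorProduct LinearMap

section Bar

variable (A : Type) [NonUnitalRing A] [Module ℂ A] [SMulCommClass ℂ A A]
  [IsScalarTower ℂ A A]

/-- The bar differential `A ⊗ A ⊗ A → A ⊗ A`. -/
noncomputable def barD : (A ⊗[ℂ] (A ⊗[ℂ] A)) →ₗ[ℂ] A ⊗[ℂ] A :=
  (rTensor A (mul' ℂ A)) ∘ₗ (TensorProduct.assoc ℂ A A A).symm.toLinearMap
    - lTensor A (mul' ℂ A)

/-- `A` is quasi-unital: the canonical map `A ⊗_A A → A` is an isomorphism. -/
def IsQuasiUnital : Prop :=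
  ∃ f : ((A ⊗[ℂ] A) ⧸ LinearMap.range (barD A)) →ₗ[ℂ] A,
    f ∘ₗ (LinearMap.range (barD A)).mkQ = mul' ℂ A ∧ Function.Bijective f

variable {M : Type} [AddCommGroup M] [Module ℂ M]

/-- The bar differential `A ⊗ A ⊗ M → A ⊗ M` for a left module with bilinear
action `act`. -/
noncomputable def barDM (act : A →ₗ[ℂ] M →ₗ[ℂ] M) :
    (A ⊗[ℂ] (A ⊗[ℂ] M)) →ₗ[ℂ] A ⊗[ℂ] M :=
  (rTensor M (mul' ℂ A)) ∘ₗ (TensorProduct.assoc ℂ A A M).symm.toLinearMap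
    - lTensor A (TensorProduct.lift act)

/-- `M` is a smooth left `A`-module: the canonical map `A ⊗_A M → M` is an
isomorphism. -/
def IsSmoothMod (act : A →ₗ[ℂ] M →ₗ[ℂ] M) : Prop :=
  ∃ f : ((A ⊗[ℂ] M) ⧸ LinearMap.range (barDM A act)) →ₗ[ℂ] M,
    f ∘ₗ (LinearMap.range (barDM A act)).mkQ = TensorProduct.lift act ∧
    Function.Bijective f

end Bar

section Ext

variable (R R' : Type)
  [NonUnitalRing R] [Module ℂ R] [SMulCommClass ℂ R R] [IsScalarTower ℂ R R]
  [NonUnitalRing R'] [Module ℂ R'] [SMulCommClass ℂ R' R'] [IsScalarTower ℂ R' R']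
  (i : R →ₗ[ℂ] R')

/-- The left action `R ⊗ R' → R'`, `r ⊗ r' ↦ i(r)·r'`. -/
noncomputable def actL : R ⊗[ℂ] R' →ₗ[ℂ] R' := (mul' ℂ R') ∘ₗ rTensor R' i

/-- The right action `R' ⊗ R → R'`, `r' ⊗ r ↦ r'·i(r)`. -/
noncomputable def actR : R' ⊗[ℂ] R →ₗ[ℂ] R' := (mul' ℂ R') ∘ₗ lTensor R' i

/-- The bar differential `R ⊗ R ⊗ R' → R ⊗ R'` for the left `R`-module `R'`. -/
noncomputable def barDL : (R ⊗[ℂ] (R ⊗[ℂ] R')) →ₗ[ℂ] R ⊗[ℂ] R' :=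
  (rTensor R' (mul' ℂ R)) ∘ₗ (TensorProduct.assoc ℂ R R R').symm.toLinearMap
    - lTensor R (actL R R' i)

/-- The bar differential `R' ⊗ R ⊗ R → R' ⊗ R` for the right `R`-module `R'`. -/
noncomputable def barDR : (R' ⊗[ℂ] (R ⊗[ℂ] R)) →ₗ[ℂ] R' ⊗[ℂ] R :=
  (rTensor R (actR R R' i)) ∘ₗ (TensorProduct.assoc ℂ R' R R).symm.toLinearMap
    - lTensor R' (mul' ℂ R)

/-- The left relation differential for `R ⊗_R R' ⊗_R R`. -/
noncomputable def barDT₁ : (R ⊗[ℂ] (R ⊗[ℂ] (R' ⊗[ℂ] R))) →ₗ[ℂ] R ⊗[ℂ] (R' ⊗[ℂ] R) :=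
  (rTensor (R' ⊗[ℂ] R) (mul' ℂ R)) ∘ₗ
      (TensorProduct.assoc ℂ R R (R' ⊗[ℂ] R)).symm.toLinearMap
    - lTensor R ((rTensor R (actL R R' i)) ∘ₗ
        (TensorProduct.assoc ℂ R R' R).symm.toLinearMap)

/-- The right relation differential for `R ⊗_R R' ⊗_R R`. -/
noncomputable def barDT₂ : (R ⊗[ℂ] (R' ⊗[ℂ] (R ⊗[ℂ] R))) →ₗ[ℂ] R ⊗[ℂ] (R' ⊗[ℂ] R) :=
  lTensor R (barDR R R' i)

/-- The relations submodule for `R ⊗_R R' ⊗_R R`. -/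
noncomputable def twoSidedRel : Submodule ℂ (R ⊗[ℂ] (R' ⊗[ℂ] R)) :=
  LinearMap.range (barDT₁ R R' i) ⊔ LinearMap.range (barDT₂ R R' i)

/-- The two-sided action map `R ⊗ R' ⊗ R → R'`, `r ⊗ r' ⊗ s ↦ i(r)·r'·i(s)`. -/
noncomputable def actT : (R ⊗[ℂ] (R' ⊗[ℂ] R)) →ₗ[ℂ] R' :=
  (actL R R' i) ∘ₗ lTensor R (actR R R' i)

section BarQuotient

variable {A : Type} [NonUnitalRing A] [Module ℂ A] [SMulCommClass ℂ A A] [IsScalarTower ℂ A A]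
  {M : Type} [AddCommGroup M] [Module ℂ M] {act : A →ₗ[ℂ] M →ₗ[ℂ] M}

theorem barDM_tmul (a b : A) (m : M) :
    barDM A act (a ⊗ₜ (b ⊗ₜ m)) = (a * b) ⊗ₜ m - a ⊗ₜ act b m := by
  simp [barDM]

theorem range_barDM_le_ker_lift (hact : ∀ (a b : A) (m : M), act (a * b) m = act a (act b m)) :
    range (barDM A act) ≤ ker (lift act) := by
  rw [range_le_ker_iff]
  ext a b m
  simp [barDM_tmul, hact]

end BarQuotient

section RestrictionOfScalars

variable {A B : Type} [NonUnitalRing A] [Module ℂ A]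
  [NonUnitalRing B] [Module ℂ B] [SMulCommClass ℂ B B] [IsScalarTower ℂ B B]
  {i : A →ₗ[ℂ] B} {M : Type} [AddCommGroup M] [Module ℂ M] (act : B →ₗ[ℂ] M →ₗ[ℂ] M)

theorem surjective_mkQ_comp_rTensor (hsurj : Function.Surjective (actL A B i)) :
    Function.Surjective ((range (barDM B act)).mkQ ∘ₗ rTensor M i) := by
  have hcongr : (range (barDM B act)).mkQ ∘ₗ rTensor M i ∘ₗ lTensor A (lift act)
      = (range (barDM B act)).mkQ ∘ₗ rTensor M (actL A B i)
          ∘ₗ (TensorProduct.assoc ℂ A B M).symm.toLinearMap := by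
    apply TensorProduct.ext_threefold'
    intro a b m
    simp only [comp_apply, lTensor_tmul, rTensor_tmul, LinearEquiv.coe_coe, assoc_symm_tmul]
    rw [Submodule.mkQ_apply, Submodule.mkQ_apply, eq_comm, Submodule.Quotient.eq]
    exact ⟨i a ⊗ₜ (b ⊗ₜ m), by simp [barDM_tmul, actL]⟩
  have hrhs : Function.Surjective ((range (barDM B act)).mkQ ∘ₗ rTensor M (actL A B i)
      ∘ₗ (TensorProduct.assoc ℂ A B M).symm.toLinearMap) :=
    (Submodule.mkQ_surjective _).comp
      ((rTensor_surjective M hsurj).comp (TensorProduct.assoc ℂ A B M).symm.surjective)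
  rw [← hcongr, ← comp_assoc, coe_comp] at hrhs
  exact hrhs.of_comp

variable [SMulCommClass ℂ A A] [IsScalarTower ℂ A A]

theorem rTensor_comp_barDM (hi : ∀ a b : A, i (a * b) = i a * i b) :
    rTensor M i ∘ₗ barDM A (act ∘ₗ i) = barDM B act ∘ₗ map i (map i id) := by
  ext a b m
  simp [barDM_tmul, hi]

noncomputable def barQuotientMap (hi : ∀ a b : A, i (a * b) = i a * i b) :
    ((A ⊗[ℂ] M) ⧸ range (barDM A (act ∘ₗ i))) →ₗ[ℂ] (B ⊗[ℂ] M) ⧸ range (barDM B act) :=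
  (range (barDM A (act ∘ₗ i))).liftQ ((range (barDM B act)).mkQ ∘ₗ rTensor M i) <| by
    rw [range_le_ker_iff, comp_assoc, rTensor_comp_barDM act hi, ← comp_assoc, range_mkQ_comp,
      zero_comp]

theorem barQuotientMap_comp_mkQ (hi : ∀ a b : A, i (a * b) = i a * i b) :
    barQuotientMap act hi ∘ₗ (range (barDM A (act ∘ₗ i))).mkQ
      = (range (barDM B act)).mkQ ∘ₗ rTensor M i :=
  Submodule.liftQ_mkQ _ _ _

theorem barQuotientMap_surjective (hi : ∀ a b : A, i (a * b) = i a * i b)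
    (hsurj : Function.Surjective (actL A B i)) :
    Function.Surjective (barQuotientMap act hi) := by
  have h := surjective_mkQ_comp_rTensor act hsurj
  rw [← barQuotientMap_comp_mkQ act hi, coe_comp] at h
  exact h.of_comp

theorem IsSmoothMod.of_surjective_actL (hi : ∀ a b : A, i (a * b) = i a * i b)
    (hsurj : Function.Surjective (actL A B i))
    (hact : ∀ (b c : B) (m : M), act (b * c) m = act b (act c m))
    (hM : IsSmoothMod A (act ∘ₗ i)) : IsSmoothMod B act := by
  obtain ⟨f, hf, hbij⟩ := hM
  set μ := (range (barDM B act)).liftQ (lift act) (range_barDM_le_ker_lift hact)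
  have hμ : μ ∘ₗ barQuotientMap act hi = f := by
    rw [← cancel_right (Submodule.mkQ_surjective _), comp_assoc, barQuotientMap_comp_mkQ,
      ← comp_assoc, Submodule.liftQ_mkQ, hf]
    ext a m
    simp
  have hμbij : Function.Bijective (μ ∘ barQuotientMap act hi) := by
    rw [← coe_comp, hμ]
    exact hbij
  exact ⟨μ, Submodule.liftQ_mkQ _ _ _,
    hμbij.1.of_comp_right (barQuotientMap_surjective act hi hsurj), hμbij.2.of_comp⟩

end RestrictionOfScalars

theorem smooth_over_extension
    (hi : ∀ a b : R, i (a * b) = i a * i b)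
    (hL : ∃ fL : ((R ⊗[ℂ] R') ⧸ LinearMap.range (barDL R R' i)) →ₗ[ℂ] R',
      fL ∘ₗ (LinearMap.range (barDL R R' i)).mkQ = actL R R' i ∧ Function.Bijective fL)
    -- the `R'`-module `M`
    (M : Type) [AddCommGroup M] [Module ℂ M]
    (act' : R' →ₗ[ℂ] M →ₗ[ℂ] M)
    (hact' : ∀ (r s : R') (m : M), act' (r * s) m = act' r (act' s m))
    -- `M` is smooth as an `R`-module via `i`
    (hMR : IsSmoothMod R (act' ∘ₗ i)) :
    IsSmoothMod R' act' := by
  obtain ⟨fL, hfL, hfLbij⟩ := hL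
  have hsurj : Function.Surjective (actL R R' i) := by
    rw [← hfL, coe_comp]
    exact hfLbij.2.comp (Submodule.mkQ_surjective _)
  exact IsSmoothMod.of_surjective_actL act' hi hsurj hact' hMR

end Ext
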